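/- arXiv:1912.11049 — 2 statements merged into one kernel-verified Lean document; each statement's English description precedes it below -/
import Mathlib

section
/- A CPTP map on a bipartite system is QI-preserving if and only if it is completely QI-preserving; that is, QIP = CQIP. -/
open Matrix Finset
open scoped Kronecker ComplexOrder

/-- A density operator: positive semidefinite with unit trace. -/
def IsDensity {n : Type*} [Fintype n] (ρ : Matrix n n ℂ) : Prop :=
  ρ.PosSemidef ∧ ρ.trace = 1

/-- A quantum-incoherent (QI) state on a bipartite system with quantum part `Q`
and incoherent part `B` (with its fixed reference basis): a state of the form
`∑ j, p j • ρ j ⊗ |j⟩⟨j|`. -/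
def IsQI {Q B : Type*} [Fintype Q] [Fintype B] [DecidableEq B]
    (σ : Matrix (Q × B) (Q × B) ℂ) : Prop :=
  ∃ (p : B → ℝ) (ρ : B → Matrix Q Q ℂ),
    (∀ j, 0 ≤ p j) ∧ (∑ j, p j = 1) ∧ (∀ j, IsDensity (ρ j)) ∧
    σ = ∑ j, (p j : ℂ) • (ρ j ⊗ₖ Matrix.single j j 1)

/-- An incoherent state: a density operator diagonal in the reference basis. -/
def IsIncoherent {n : Type*} [Fintype n] (σ : Matrix n n ℂ) : Prop :=
  IsDensity σ ∧ ∀ x y, x ≠ y → σ x y = 0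

/-- The extension `id_k ⊗ E` of a linear map on matrices. -/
def tensId {n m : Type*} (k : Type*)
    (E : Matrix n n ℂ →ₗ[ℂ] Matrix m m ℂ) :
    Matrix (k × n) (k × n) ℂ →ₗ[ℂ] Matrix (k × m) (k × m) ℂ where
  toFun X := Matrix.of fun p q => E (Matrix.of fun a b => X (p.1, a) (q.1, b)) p.2 q.2
  map_add' X Y := by
    ext p q
    show E (Matrix.of fun a b => (X + Y) (p.1, a) (q.1, b)) p.2 q.2 = _
    rw [show (Matrix.of fun a b => (X + Y) (p.1, a) (q.1, b)) =
        (Matrix.of fun a b => X (p.1, a) (q.1, b)) +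
        (Matrix.of fun a b => Y (p.1, a) (q.1, b)) from rfl, map_add]
    rfl
  map_smul' c X := by
    ext p q
    show E (Matrix.of fun a b => (c • X) (p.1, a) (q.1, b)) p.2 q.2 = _
    rw [show (Matrix.of fun a b => (c • X) (p.1, a) (q.1, b)) =
        c • (Matrix.of fun a b => X (p.1, a) (q.1, b)) from rfl, _root_.map_smul]
    rfl

/-- Complete positivity: `id_k ⊗ E` preserves positive semidefiniteness for all `k`. -/
def IsCompletelyPositive {n m : Type*} [Fintype n] [Fintype m]
    (E : Matrix n n ℂ →ₗ[ℂ] Matrix m m ℂ) : Prop :=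
  ∀ (k : ℕ) (X : Matrix (Fin k × n) (Fin k × n) ℂ), X.PosSemidef →
    ((tensId (Fin k) E) X).PosSemidef

/-- A completely positive trace-preserving (CPTP) linear map. -/
def IsCPTP {n m : Type*} [Fintype n] [Fintype m]
    (E : Matrix n n ℂ →ₗ[ℂ] Matrix m m ℂ) : Prop :=
  IsCompletelyPositive E ∧ ∀ X, (E X).trace = X.trace

/-- The basis density operators `ρ_{a,b}` built from the reference basis. -/
noncomputable def rhoBasis (D : ℕ) (a b : Fin D) : Matrix (Fin D) (Fin D) ℂ :=
  if a = b then Matrix.single a a 1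
  else if (a : ℕ) < b then
    (1 / 2 : ℂ) • (Matrix.single a a 1 + Matrix.single a b 1 +
      Matrix.single b a 1 + Matrix.single b b 1)
  else
    (1 / 2 : ℂ) • (Matrix.single a a 1 + (-Complex.I) • Matrix.single a b 1 +
      Complex.I • Matrix.single b a 1 + Matrix.single b b 1)

/-- The extension `id^{A'B'} ⊗ E` of a bipartite map `E` on `AB`, acting on the system
`(A'A)(B'B)` with quantum part `A'A` and incoherent part `B'B`. -/
def extMap (DA DB DA' DB' : ℕ)
    (E : Matrix (Fin DA × Fin DB) (Fin DA × Fin DB) ℂ →ₗ[ℂ]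
      Matrix (Fin DA × Fin DB) (Fin DA × Fin DB) ℂ) :
    Matrix ((Fin DA' × Fin DA) × (Fin DB' × Fin DB)) ((Fin DA' × Fin DA) × (Fin DB' × Fin DB)) ℂ
      →ₗ[ℂ]
    Matrix ((Fin DA' × Fin DA) × (Fin DB' × Fin DB)) ((Fin DA' × Fin DA) × (Fin DB' × Fin DB)) ℂ
    where
  toFun X := Matrix.of fun p q =>
    E (Matrix.of fun x y => X ((p.1.1, x.1), (p.2.1, x.2)) ((q.1.1, y.1), (q.2.1, y.2)))
      (p.1.2, p.2.2) (q.1.2, q.2.2)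
  map_add' X Y := by
    ext p q
    show E (Matrix.of fun (x y : Fin DA × Fin DB) =>
        (X + Y) ((p.1.1, x.1), (p.2.1, x.2)) ((q.1.1, y.1), (q.2.1, y.2)))
        (p.1.2, p.2.2) (q.1.2, q.2.2) = _
    rw [show (Matrix.of fun (x y : Fin DA × Fin DB) =>
          (X + Y) ((p.1.1, x.1), (p.2.1, x.2)) ((q.1.1, y.1), (q.2.1, y.2))) =
        (Matrix.of fun (x y : Fin DA × Fin DB) =>
          X ((p.1.1, x.1), (p.2.1, x.2)) ((q.1.1, y.1), (q.2.1, y.2))) +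
        (Matrix.of fun (x y : Fin DA × Fin DB) =>
          Y ((p.1.1, x.1), (p.2.1, x.2)) ((q.1.1, y.1), (q.2.1, y.2)))
        from rfl, map_add]
    rfl
  map_smul' c X := by
    ext p q
    show E (Matrix.of fun (x y : Fin DA × Fin DB) =>
        (c • X) ((p.1.1, x.1), (p.2.1, x.2)) ((q.1.1, y.1), (q.2.1, y.2)))
        (p.1.2, p.2.2) (q.1.2, q.2.2) = _
    rw [show (Matrix.of fun (x y : Fin DA × Fin DB) =>
          (c • X) ((p.1.1, x.1), (p.2.1, x.2)) ((q.1.1, y.1), (q.2.1, y.2))) =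
        c • (Matrix.of fun (x y : Fin DA × Fin DB) =>
          X ((p.1.1, x.1), (p.2.1, x.2)) ((q.1.1, y.1), (q.2.1, y.2)))
        from rfl, _root_.map_smul]
    rfl

/-- Completely QI-preserving: every extension `id^{A'B'} ⊗ E` maps QI states
(quantum part `A'A`, incoherent part `B'B`) to QI states. -/
def IsCQIP (DA DB : ℕ)
    (E : Matrix (Fin DA × Fin DB) (Fin DA × Fin DB) ℂ →ₗ[ℂ]
      Matrix (Fin DA × Fin DB) (Fin DA × Fin DB) ℂ) : Prop :=
  ∀ (DA' DB' : ℕ)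
    (σ : Matrix ((Fin DA' × Fin DA) × (Fin DB' × Fin DB))
      ((Fin DA' × Fin DA) × (Fin DB' × Fin DB)) ℂ),
    IsQI σ → IsQI (extMap DA DB DA' DB' E σ)

/-- The extension `id^{A''} ⊗ E` with only a quantum auxiliary system `A''`, acting on
`(A''A)B` with quantum part `A''A` and incoherent part `B`. -/
def extMapA (DA DB DA'' : ℕ)
    (E : Matrix (Fin DA × Fin DB) (Fin DA × Fin DB) ℂ →ₗ[ℂ]
      Matrix (Fin DA × Fin DB) (Fin DA × Fin DB) ℂ) :
    Matrix ((Fin DA'' × Fin DA) × Fin DB) ((Fin DA'' × Fin DA) × Fin DB) ℂ →ₗ[ℂ]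
    Matrix ((Fin DA'' × Fin DA) × Fin DB) ((Fin DA'' × Fin DA) × Fin DB) ℂ where
  toFun X := Matrix.of fun p q =>
    E (Matrix.of fun x y => X ((p.1.1, x.1), x.2) ((q.1.1, y.1), y.2))
      (p.1.2, p.2) (q.1.2, q.2)
  map_add' X Y := by
    ext p q
    show E (Matrix.of fun (x y : Fin DA × Fin DB) =>
        (X + Y) ((p.1.1, x.1), x.2) ((q.1.1, y.1), y.2)) (p.1.2, p.2) (q.1.2, q.2) = _
    rw [show (Matrix.of fun (x y : Fin DA × Fin DB) =>
          (X + Y) ((p.1.1, x.1), x.2) ((q.1.1, y.1), y.2)) =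
        (Matrix.of fun (x y : Fin DA × Fin DB) => X ((p.1.1, x.1), x.2) ((q.1.1, y.1), y.2)) +
        (Matrix.of fun (x y : Fin DA × Fin DB) => Y ((p.1.1, x.1), x.2) ((q.1.1, y.1), y.2))
        from rfl, map_add]
    rfl
  map_smul' c X := by
    ext p q
    show E (Matrix.of fun (x y : Fin DA × Fin DB) =>
        (c • X) ((p.1.1, x.1), x.2) ((q.1.1, y.1), y.2)) (p.1.2, p.2) (q.1.2, q.2) = _
    rw [show (Matrix.of fun (x y : Fin DA × Fin DB) =>
          (c • X) ((p.1.1, x.1), x.2) ((q.1.1, y.1), y.2)) =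
        c • (Matrix.of fun (x y : Fin DA × Fin DB) => X ((p.1.1, x.1), x.2) ((q.1.1, y.1), y.2))
        from rfl, _root_.map_smul]
    rfl

/-- The maximally entangled state `|Φ_D⟩⟨Φ_D|` with `|Φ_D⟩ = (1/√D) ∑ d |d⟩|d⟩`. -/
noncomputable def maxEnt (D : ℕ) : Matrix (Fin D × Fin D) (Fin D × Fin D) ℂ :=
  Matrix.of fun p q => if p.1 = p.2 ∧ q.1 = q.2 then (1 / D : ℂ) else 0


/-!
A state is QI exactly when it is a density operator that is block diagonal with respect to the
incoherent factor. A QI-preserving `E` therefore maps `τ ⊗ |j⟩⟨j|` to a block-diagonal matrix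
for every state `τ`, and since states span all matrices, it maps every block-diagonal matrix to a
block-diagonal one. The extension `id ⊗ E` acts on the blocks indexed by `A'B'`; the blocks of a
block-diagonal input vanish off the `B'`-diagonal and are themselves block diagonal in `B`, so
the output is again block diagonal, and complete positivity and trace preservation make it a
state. The converse is the case of trivial auxiliary systems.
-/

section Density

variable {n : Type*} [Fintype n]

lemma isDensity_inv_trace_smul {A : Matrix n n ℂ} (hA : A.PosSemidef) (h : A.trace ≠ 0) :
    IsDensity (A.trace⁻¹ • A) :=
  ⟨hA.smul (inv_nonneg_of_nonneg hA.trace_nonneg),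
    by rw [trace_smul, smul_eq_mul, inv_mul_cancel₀ h]⟩

lemma exists_isDensity [Nonempty n] : ∃ ρ : Matrix n n ℂ, IsDensity ρ := by
  classical
  exact ⟨_, isDensity_inv_trace_smul PosSemidef.one (by simp)⟩

open scoped MatrixOrder Matrix.Norms.L2Operator in
lemma span_isDensity : Submodule.span ℂ {ρ : Matrix n n ℂ | IsDensity ρ} = ⊤ := by
  classical
  have span_posSemidef : Submodule.span ℂ {A : Matrix n n ℂ | A.PosSemidef} = ⊤ := by
    simpa only [nonneg_iff_posSemidef] using CStarAlgebra.span_nonneg (A := Matrix n n ℂ)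
  rw [eq_top_iff, ← span_posSemidef, Submodule.span_le]
  intro A hA
  by_cases h : A.trace = 0
  · rw [(hA.trace_eq_zero_iff).1 h]
    exact Submodule.zero_mem _
  · rw [← smul_inv_smul₀ h A]
    exact Submodule.smul_mem _ _ (Submodule.subset_span (isDensity_inv_trace_smul hA h))

lemma trace_submatrix_equiv {m : Type*} [Fintype m] (A : Matrix n n ℂ) (e : m ≃ n) :
    (A.submatrix e e).trace = A.trace :=
  e.sum_comp fun i => A i i

end Density

section BlockDiagonal

variable {Q B : Type*}

variable (Q B) in
def blockDiagonalSubmodule : Submodule ℂ (Matrix (Q × B) (Q × B) ℂ) where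
  carrier := {X | ∀ a b c d, b ≠ d → X (a, b) (c, d) = 0}
  add_mem' hX hY a b c d hbd := by simp [hX a b c d hbd, hY a b c d hbd]
  zero_mem' _ _ _ _ _ := rfl
  smul_mem' z X hX a b c d hbd := by simp [hX a b c d hbd]

variable [DecidableEq B]

lemma blockDiagonal_mem_blockDiagonalSubmodule (M : B → Matrix Q Q ℂ) :
    blockDiagonal M ∈ blockDiagonalSubmodule Q B :=
  fun _ _ _ _ hbd => blockDiagonal_apply_ne M _ _ hbd

lemma blockDiagonal_blockDiag_of_mem {X : Matrix (Q × B) (Q × B) ℂ}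
    (hX : X ∈ blockDiagonalSubmodule Q B) : blockDiagonal (blockDiag X) = X := by
  ext ⟨a, b⟩ ⟨c, d⟩
  by_cases hbd : b = d
  · subst hbd
    rw [blockDiagonal_apply_eq]
    rfl
  · rw [blockDiagonal_apply_ne _ _ _ hbd, hX a b c d hbd]

lemma kronecker_single_eq_blockDiagonal (ρ : Matrix Q Q ℂ) (j : B) :
    ρ ⊗ₖ single j j 1 = blockDiagonal (Pi.single j ρ) := by
  ext ⟨a, b⟩ ⟨c, d⟩
  rcases eq_or_ne b d with rfl | hbd
  · rcases eq_or_ne b j with rfl | hbj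
    · simp
    · simp [hbj, hbj.symm]
  · simp [blockDiagonal_apply_ne _ _ _ hbd, single_apply]
    grind

variable [Fintype B]

lemma sum_kronecker_single_eq_blockDiagonal (ρ : B → Matrix Q Q ℂ) :
    ∑ j, ρ j ⊗ₖ single j j 1 = blockDiagonal ρ := by
  simp_rw [kronecker_single_eq_blockDiagonal, ← blockDiagonalAddMonoidHom_apply, ← map_sum,
    Finset.univ_sum_single]

end BlockDiagonal

section QuantumIncoherent

variable {Q B : Type*} [Fintype Q] [Fintype B] [DecidableEq B]

lemma isQI_blockDiagonal {M : B → Matrix Q Q ℂ} (hM : ∀ j, (M j).PosSemidef)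
    (htr : ∑ j, (M j).trace = 1) : IsQI (blockDiagonal M) := by
  have : Nonempty Q := by
    by_contra h
    rw [not_nonempty_iff] at h
    simp [trace] at htr
  -- blocks of zero trace vanish, so any state can stand in for them
  obtain ⟨ρ₀, hρ₀⟩ := exists_isDensity (n := Q)
  have htr_re j : (((M j).trace.re : ℝ) : ℂ) = (M j).trace :=
    (Complex.eq_re_of_ofReal_le (r := 0) (by simpa using (hM j).trace_nonneg)).symm
  refine ⟨fun j => (M j).trace.re,
    fun j => if (M j).trace = 0 then ρ₀ else (M j).trace⁻¹ • M j,
    fun j => (Complex.nonneg_iff.1 (hM j).trace_nonneg).1, ?_, fun j => ?_, ?_⟩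
  · exact_mod_cast (by simpa [htr_re] using htr : ((∑ j, (M j).trace.re : ℝ) : ℂ) = 1)
  · dsimp only
    split_ifs with h
    exacts [hρ₀, isDensity_inv_trace_smul (hM j) h]
  · simp_rw [← smul_kronecker, sum_kronecker_single_eq_blockDiagonal, htr_re]
    congr 1
    funext j
    split_ifs with h
    · rw [h, zero_smul, ← (hM j).trace_eq_zero_iff, h]
    · rw [smul_inv_smul₀ h]

lemma isQI_iff {σ : Matrix (Q × B) (Q × B) ℂ} :
    IsQI σ ↔ IsDensity σ ∧ σ ∈ blockDiagonalSubmodule Q B := by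
  constructor
  · rintro ⟨p, ρ, hp0, hp1, hρ, rfl⟩
    refine ⟨⟨posSemidef_sum _ fun j _ => ?_, ?_⟩, ?_⟩
    · refine ((hρ j).1.kronecker ?_).smul (Complex.zero_le_real.2 (hp0 j))
      rw [← diagonal_single]
      exact posSemidef_diagonal_iff.2 (Pi.single_nonneg.2 zero_le_one)
    · simp [trace_kronecker, fun j => (hρ j).2, ← Complex.ofReal_sum, hp1]
    · simp_rw [← smul_kronecker, sum_kronecker_single_eq_blockDiagonal]
      exact blockDiagonal_mem_blockDiagonalSubmodule _
  · rintro ⟨hσ, hmem⟩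
    rw [← blockDiagonal_blockDiag_of_mem hmem]
    refine isQI_blockDiagonal (fun j => hσ.1.submatrix _) ?_
    rw [← trace_blockDiagonal, blockDiagonal_blockDiag_of_mem hmem, hσ.2]

lemma isQI_kronecker_single {ρ : Matrix Q Q ℂ} (hρ : IsDensity ρ) (j : B) :
    IsQI (ρ ⊗ₖ single j j 1) := by
  refine ⟨Pi.single j 1, fun _ => ρ, fun j' => by
    rw [Pi.single_apply]; split_ifs <;> norm_num, by simp, fun _ => hρ, ?_⟩
  rw [Finset.sum_eq_single j (fun j' _ hj' => by simp [hj']) (by simp)]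
  simp

lemma IsQI.submatrix_prodCongr {Q' B' : Type*} [Fintype Q'] [Fintype B'] [DecidableEq B']
    {σ : Matrix (Q × B) (Q × B) ℂ} (h : IsQI σ) (eQ : Q' ≃ Q) (eB : B' ≃ B) :
    IsQI (σ.submatrix (eQ.prodCongr eB) (eQ.prodCongr eB)) := by
  obtain ⟨⟨hpsd, htr⟩, hmem⟩ := isQI_iff.1 h
  exact isQI_iff.2 ⟨⟨hpsd.submatrix _, (trace_submatrix_equiv _ _).trans htr⟩,
    fun a b c d hbd => hmem _ _ _ _ (eB.injective.ne hbd)⟩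

end QuantumIncoherent

section QIPreserving

variable {Q B Q' B' : Type*} [Fintype Q] [Fintype B] [DecidableEq B] [Fintype Q'] [Fintype B']
  [DecidableEq B']

def IsQIPreserving (E : Matrix (Q × B) (Q × B) ℂ →ₗ[ℂ] Matrix (Q' × B') (Q' × B') ℂ) : Prop :=
  ∀ σ, IsQI σ → IsQI (E σ)

lemma IsQIPreserving.map_mem_blockDiagonalSubmodule
    {E : Matrix (Q × B) (Q × B) ℂ →ₗ[ℂ] Matrix (Q' × B') (Q' × B') ℂ} (hE : IsQIPreserving E)
    {X : Matrix (Q × B) (Q × B) ℂ} (hX : X ∈ blockDiagonalSubmodule Q B) :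
    E X ∈ blockDiagonalSubmodule Q' B' := by
  have map_kronecker_single j (τ : Matrix Q Q ℂ) :
      E (τ ⊗ₖ single j j 1) ∈ blockDiagonalSubmodule Q' B' := by
    let kron : Matrix Q Q ℂ →ₗ[ℂ] Matrix (Q × B) (Q × B) ℂ :=
      kroneckerBilinear.flip (single j j 1)
    have hspan : Submodule.span ℂ {ρ | IsDensity ρ} ≤
        (blockDiagonalSubmodule Q' B').comap (E ∘ₗ kron) :=
      Submodule.span_le.2 fun ρ hρ => (isQI_iff.1 (hE _ (isQI_kronecker_single hρ j))).2
    exact hspan (by simp [span_isDensity])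
  rw [← blockDiagonal_blockDiag_of_mem hX, ← sum_kronecker_single_eq_blockDiagonal, map_sum]
  exact Submodule.sum_mem _ fun j _ => map_kronecker_single j _

end QIPreserving

section TensId

variable {n m k : Type*} {E : Matrix n n ℂ →ₗ[ℂ] Matrix m m ℂ}

lemma tensId_submatrix_prodMap {k' : Type*} (f : k → k') (X : Matrix (k' × n) (k' × n) ℂ) :
    tensId k E (X.submatrix (Prod.map f id) (Prod.map f id)) =
      (tensId k' E X).submatrix (Prod.map f id) (Prod.map f id) :=
  rfl

variable [Fintype n] [Fintype m] [Fintype k]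

lemma IsCompletelyPositive.posSemidef_tensId (hE : IsCompletelyPositive E)
    {X : Matrix (k × n) (k × n) ℂ} (hX : X.PosSemidef) : (tensId k E X).PosSemidef := by
  let e := Fintype.equivFin k
  have hX' : X = (X.submatrix (Prod.map e.symm id) (Prod.map e.symm id)).submatrix
      (Prod.map e id) (Prod.map e id) := by
    simp [submatrix_submatrix, Prod.map_comp_map]
  rw [hX', tensId_submatrix_prodMap]
  exact (hE _ _ (hX.submatrix _)).submatrix _

lemma trace_tensId (hE : ∀ X, (E X).trace = X.trace) (X : Matrix (k × n) (k × n) ℂ) :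
    (tensId k E X).trace = X.trace := by
  simp only [trace, Fintype.sum_prod_type, Matrix.diag]
  exact Finset.sum_congr rfl fun i _ => hE (of fun a b => X (i, a) (i, b))

end TensId

section Extension

variable {DA DB DA' DB' : ℕ}
  {E : Matrix (Fin DA × Fin DB) (Fin DA × Fin DB) ℂ →ₗ[ℂ]
    Matrix (Fin DA × Fin DB) (Fin DA × Fin DB) ℂ}

lemma extMap_eq_submatrix_tensId (X : Matrix ((Fin DA' × Fin DA) × (Fin DB' × Fin DB))
      ((Fin DA' × Fin DA) × (Fin DB' × Fin DB)) ℂ) :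
    let π := Equiv.prodProdProdComm (Fin DA') (Fin DA) (Fin DB') (Fin DB)
    extMap DA DB DA' DB' E X =
      (tensId (Fin DA' × Fin DB') E (X.submatrix π.symm π.symm)).submatrix π π :=
  rfl

lemma IsCPTP.isDensity_extMap (hE : IsCPTP E)
    {X : Matrix ((Fin DA' × Fin DA) × (Fin DB' × Fin DB))
      ((Fin DA' × Fin DA) × (Fin DB' × Fin DB)) ℂ} (hX : IsDensity X) :
    IsDensity (extMap DA DB DA' DB' E X) := by
  rw [extMap_eq_submatrix_tensId]
  exact ⟨(hE.1.posSemidef_tensId (hX.1.submatrix _)).submatrix _, by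
    rw [trace_submatrix_equiv, trace_tensId hE.2, trace_submatrix_equiv, hX.2]⟩

lemma extMap_mem_blockDiagonalSubmodule
    (hE : ∀ X ∈ blockDiagonalSubmodule (Fin DA) (Fin DB), E X ∈ blockDiagonalSubmodule _ _)
    {X : Matrix ((Fin DA' × Fin DA) × (Fin DB' × Fin DB))
      ((Fin DA' × Fin DA) × (Fin DB' × Fin DB)) ℂ} (hX : X ∈ blockDiagonalSubmodule _ _) :
    extMap DA DB DA' DB' E X ∈ blockDiagonalSubmodule _ _ := by
  rintro ⟨a', a⟩ ⟨b', b⟩ ⟨c', c⟩ ⟨d', d⟩ hne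
  set block : Matrix (Fin DA × Fin DB) (Fin DA × Fin DB) ℂ :=
    of fun x y => X ((a', x.1), (b', x.2)) ((c', y.1), (d', y.2))
  change E block (a, b) (c, d) = 0
  rcases eq_or_ne b' d' with rfl | hb'
  · refine hE block (fun x y z w hyw => hX _ _ _ _ ?_) a b c d fun hbd => hne (hbd ▸ rfl)
    exact fun h => hyw (congrArg Prod.snd h)
  · have hblock : block = 0 := by
      ext x y
      exact hX _ _ _ _ fun h => hb' (congrArg Prod.fst h)
    rw [hblock, map_zero, Matrix.zero_apply]

end Extension

/-- a CPTP map on a bipartite system is QI-preserving iff it is completely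
QI-preserving: `QIP = CQIP`. -/
theorem qip_eq_cqip (DA DB : ℕ)
    (E : Matrix (Fin DA × Fin DB) (Fin DA × Fin DB) ℂ →ₗ[ℂ]
      Matrix (Fin DA × Fin DB) (Fin DA × Fin DB) ℂ)
    (hE : IsCPTP E) :
    (∀ σ, IsQI σ → IsQI (E σ)) ↔ IsCQIP DA DB E := by
  constructor
  · intro (hQIP : IsQIPreserving E) DA' DB' σ hσ
    rw [isQI_iff] at hσ ⊢
    exact ⟨hE.isDensity_extMap hσ.1,
      extMap_mem_blockDiagonalSubmodule (fun _ => hQIP.map_mem_blockDiagonalSubmodule) hσ.2⟩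
  · intro hCQIP σ hσ
    let eA := Equiv.uniqueProd (Fin DA) (Fin 1)
    let eB := Equiv.uniqueProd (Fin DB) (Fin 1)
    -- with one-dimensional auxiliary systems, `extMap` is `E` up to reindexing, definitionally
    have h : IsQI ((E σ).submatrix (eA.prodCongr eB) (eA.prodCongr eB)) :=
      hCQIP 1 1 _ (hσ.submatrix_prodCongr eA eB)
    simpa [submatrix_submatrix, Prod.map_comp_map] using h.submatrix_prodCongr eA.symm eB.symm
end

section
/- Every one-way LQICC map, i.e., a CPTP map of the form Σ_i E_i^A ⊗ Ẽ_i^B where {E_i^A} is a quantum instrument on A (each E_i completely positive and Σ_i E_i trace-preserving) and each Ẽ_i^B is an incoherent CPTP map on B, is QI-preserving. -/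
open Matrix Finset
open scoped Kronecker ComplexOrder

/-- The incoherent Kraus operator `K = ∑ j, c j • |f j⟩⟨j|`. -/
noncomputable def krausOf (D : ℕ) (c : Fin D → ℂ) (f : Fin D → Fin D) : Matrix (Fin D) (Fin D) ℂ :=
  ∑ j, c j • Matrix.single (f j) j 1

/-- An incoherent CPTP operation on `B`: it admits a Kraus decomposition into incoherent
Kraus operators `K_k = ∑ j, c_k(j) |f_k(j)⟩⟨j|` with `∑ k, K_k† K_k = I`. -/
def IsIncoherentOp (DB : ℕ)
    (G : Matrix (Fin DB) (Fin DB) ℂ →ₗ[ℂ] Matrix (Fin DB) (Fin DB) ℂ) : Prop :=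
  ∃ (N : ℕ) (c : Fin N → Fin DB → ℂ) (f : Fin N → Fin DB → Fin DB),
    (∑ k, (krausOf DB (c k) (f k))ᴴ * krausOf DB (c k) (f k) = 1) ∧
    ∀ X, G X = ∑ k, krausOf DB (c k) (f k) * X * (krausOf DB (c k) (f k))ᴴ

/-- The tensor product `F ⊗ G` of superoperators on `A` and `B`, acting on `AB`. -/
noncomputable def mapTensor (DA DB : ℕ)
    (F : Matrix (Fin DA) (Fin DA) ℂ →ₗ[ℂ] Matrix (Fin DA) (Fin DA) ℂ)
    (G : Matrix (Fin DB) (Fin DB) ℂ →ₗ[ℂ] Matrix (Fin DB) (Fin DB) ℂ) :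
    Matrix (Fin DA × Fin DB) (Fin DA × Fin DB) ℂ →ₗ[ℂ]
    Matrix (Fin DA × Fin DB) (Fin DA × Fin DB) ℂ where
  toFun X := ∑ x : (Fin DA × Fin DB) × (Fin DA × Fin DB),
    X x.1 x.2 • (F (Matrix.single x.1.1 x.2.1 1) ⊗ₖ
      G (Matrix.single x.1.2 x.2.2 1))
  map_add' X Y := by
    simp [Matrix.add_apply, add_smul, Finset.sum_add_distrib]
  map_smul' c X := by
    simp [Matrix.smul_apply, smul_smul, Finset.smul_sum]

/-! Each incoherent Kraus operator sends `|j⟩` to a multiple of `|f j⟩`, so an incoherent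
operation maps `|j⟩⟨j|` to a probability mixture `∑ m, q j m • |m⟩⟨m|`. Applied to a QI state
`∑ j, p j • ρ j ⊗ |j⟩⟨j|`, the LQICC map therefore yields `∑ m, τ m ⊗ |m⟩⟨m|` with
`τ m = ∑ i j, p j q_i j m • E_i (ρ j)`. Each `τ m` is positive semidefinite because the `E_i` are
completely positive, and the traces of the `τ m` add up to one because `q_i` is stochastic and
`∑ i, E_i` is trace-preserving; normalising the `τ m` gives the QI decomposition. -/

namespace Matrix

variable {R l m n p ι : Type*} [CommSemiring R]

lemma sum_kronecker (s : Finset ι) (A : ι → Matrix l m R) (B : Matrix n p R) :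
    (∑ i ∈ s, A i) ⊗ₖ B = ∑ i ∈ s, A i ⊗ₖ B :=
  map_sum ((kroneckerBilinear (R := R)).flip B) A s

lemma kronecker_sum (s : Finset ι) (A : Matrix l m R) (B : ι → Matrix n p R) :
    A ⊗ₖ (∑ i ∈ s, B i) = ∑ i ∈ s, A ⊗ₖ B i :=
  map_sum (kroneckerBilinear (R := R) A) B s

end Matrix

lemma LinearMap.apply_eq_sum_single {R m n M : Type*} [CommSemiring R] [Fintype m] [Fintype n]
    [DecidableEq m] [DecidableEq n] [AddCommMonoid M] [Module R M]
    (F : Matrix m n R →ₗ[R] M) (A : Matrix m n R) :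
    F A = ∑ a, ∑ b, A a b • F (Matrix.single a b 1) := by
  conv_lhs => rw [matrix_eq_sum_single A]
  simp only [map_sum, ← _root_.map_smul, smul_single, smul_eq_mul, mul_one]

lemma mapTensor_kronecker (DA DB : ℕ)
    (F : Matrix (Fin DA) (Fin DA) ℂ →ₗ[ℂ] Matrix (Fin DA) (Fin DA) ℂ)
    (G : Matrix (Fin DB) (Fin DB) ℂ →ₗ[ℂ] Matrix (Fin DB) (Fin DB) ℂ)
    (A : Matrix (Fin DA) (Fin DA) ℂ) (B : Matrix (Fin DB) (Fin DB) ℂ) :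
    mapTensor DA DB F G (A ⊗ₖ B) = F A ⊗ₖ G B := by
  rw [F.apply_eq_sum_single, G.apply_eq_sum_single]
  simp only [mapTensor, LinearMap.coe_mk, AddHom.coe_mk, Fintype.sum_prod_type, sum_kronecker]
  simp only [kronecker_sum, smul_kronecker, kronecker_smul, smul_smul, kroneckerMap_apply]
  refine Finset.sum_congr rfl fun a _ => ?_
  rw [Finset.sum_comm]
  simp only [mul_comm]

lemma IsCompletelyPositive.posSemidef_apply {n m : Type*} [Fintype n] [Fintype m]
    {E : Matrix n n ℂ →ₗ[ℂ] Matrix m m ℂ} (hE : IsCompletelyPositive E)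
    {X : Matrix n n ℂ} (hX : X.PosSemidef) : (E X).PosSemidef :=
  (posSemidef_submatrix_equiv (Equiv.uniqueProd m (Fin 1))).mp
    (hE 1 (X.submatrix Prod.snd Prod.snd) (hX.submatrix _))

lemma trace_sum_mul_mul_conjTranspose {n m ι : Type*} [Fintype n] [DecidableEq n] [Fintype m]
    [Fintype ι] (K : ι → Matrix m n ℂ) (hK : ∑ k, (K k)ᴴ * K k = 1) (X : Matrix n n ℂ) :
    (∑ k, K k * X * (K k)ᴴ).trace = X.trace := by
  simp_rw [trace_sum, trace_mul_comm _ (K _)ᴴ, ← Matrix.mul_assoc, ← trace_sum, ← Finset.sum_mul,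
    hK, Matrix.one_mul]

section Kraus

variable {D : ℕ} (c : Fin D → ℂ) (f : Fin D → Fin D)

lemma krausOf_mul_single (j : Fin D) :
    krausOf D c f * single j j 1 = c j • single (f j) j 1 := by
  rw [krausOf, Finset.sum_mul, Finset.sum_eq_single j]
  · rw [smul_mul_assoc, single_mul_single_same, mul_one]
  · intro t _ ht
    rw [smul_mul_assoc, single_mul_single_of_ne (h := ht), smul_zero]
  · simp

lemma krausOf_mul_single_mul_conjTranspose (j : Fin D) :
    krausOf D c f * single j j 1 * (krausOf D c f)ᴴ =
      (Complex.normSq (c j) : ℂ) • single (f j) (f j) 1 := by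
  set K := krausOf D c f
  have hsq : K * single j j 1 * Kᴴ = K * single j j 1 * (K * single j j 1)ᴴ := by
    simp only [conjTranspose_mul, conjTranspose_single, star_one, ← Matrix.mul_assoc]
    rw [Matrix.mul_assoc K (single j j 1) (single j j 1), single_mul_single_same, mul_one]
  rw [hsq, krausOf_mul_single, conjTranspose_smul, conjTranspose_single, star_one,
    smul_mul_smul_comm, single_mul_single_same, mul_one, Complex.star_def, Complex.mul_conj]

end Kraus

namespace IsIncoherentOp

variable {D : ℕ} {G : Matrix (Fin D) (Fin D) ℂ →ₗ[ℂ] Matrix (Fin D) (Fin D) ℂ}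

lemma trace_apply (hG : IsIncoherentOp D G) (X : Matrix (Fin D) (Fin D) ℂ) :
    (G X).trace = X.trace := by
  obtain ⟨N, c, f, hK, hGK⟩ := hG
  rw [hGK, trace_sum_mul_mul_conjTranspose _ hK]

lemma exists_stochastic_apply_single (hG : IsIncoherentOp D G) :
    ∃ q : Fin D → Fin D → ℝ, (∀ j m, 0 ≤ q j m) ∧ (∀ j, ∑ m, q j m = 1) ∧
      ∀ j, G (single j j 1) = ∑ m, (q j m : ℂ) • single m m 1 := by
  obtain ⟨N, c, f, hK, hGK⟩ := id hG
  let q j m := ∑ k, if f k j = m then Complex.normSq (c k j) else 0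
  have hq : ∀ j, G (single j j 1) = ∑ m, (q j m : ℂ) • single m m 1 := by
    intro j
    simp only [hGK, krausOf_mul_single_mul_conjTranspose, q, Complex.ofReal_sum, Finset.sum_smul]
    rw [Finset.sum_comm]
    refine Finset.sum_congr rfl fun k _ => ?_
    simp [apply_ite]
  refine ⟨q, fun j m => Finset.sum_nonneg fun k _ => ?_, fun j => ?_, hq⟩
  · split_ifs <;> simp [Complex.normSq_nonneg]
  · have htr := hG.trace_apply (single j j 1)
    simp only [hq, trace_sum, trace_smul, trace_single_eq_same, smul_eq_mul, mul_one] at htr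
    exact_mod_cast htr

end IsIncoherentOp

lemma Matrix.PosSemidef.exists_isDensity_eq_smul {Q : Type*} [Fintype Q] [DecidableEq Q]
    [Nonempty Q] {τ : Matrix Q Q ℂ} (hτ : τ.PosSemidef) :
    ∃ ρ, IsDensity ρ ∧ τ = (τ.trace.re : ℂ) • ρ := by
  have htr : τ.trace = (τ.trace.re : ℂ) :=
    Complex.eq_re_of_ofReal_le (r := 0) (by rw [Complex.ofReal_zero]; exact hτ.trace_nonneg)
  set t := τ.trace.re
  by_cases h0 : t = 0
  · -- then `τ = 0`, and any state will do; take the maximally mixed one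
    refine ⟨(((Fintype.card Q : ℝ)⁻¹ : ℝ) : ℂ) • 1, ⟨PosSemidef.one.smul ?_, ?_⟩, ?_⟩
    · exact Complex.zero_le_real.mpr (inv_nonneg.mpr (Nat.cast_nonneg _))
    · simp [trace_one]
    · rw [h0, Complex.ofReal_zero, zero_smul, ← hτ.trace_eq_zero_iff, htr, h0, Complex.ofReal_zero]
  · refine ⟨((t⁻¹ : ℝ) : ℂ) • τ, ⟨hτ.smul ?_, ?_⟩, ?_⟩
    · exact Complex.zero_le_real.mpr (inv_nonneg.mpr (Complex.nonneg_iff.mp hτ.trace_nonneg).1)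
    · rw [trace_smul, smul_eq_mul, htr, ← Complex.ofReal_mul, inv_mul_cancel₀ h0, Complex.ofReal_one]
    · rw [smul_smul, ← Complex.ofReal_mul, mul_inv_cancel₀ h0, Complex.ofReal_one, one_smul]

lemma isQI_sum_kronecker_single {Q B : Type*} [Fintype Q] [DecidableEq Q] [Fintype B]
    [DecidableEq B] (τ : B → Matrix Q Q ℂ) (hτ : ∀ m, (τ m).PosSemidef)
    (htr : ∑ m, (τ m).trace = 1) : IsQI (∑ m, τ m ⊗ₖ single m m 1) := by
  have : Nonempty Q := by
    by_contra hQ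
    rw [not_nonempty_iff] at hQ
    simp [trace_eq_zero_of_isEmpty] at htr
  choose ρ hρ hτρ using fun m => (hτ m).exists_isDensity_eq_smul
  refine ⟨fun m => (τ m).trace.re, ρ, fun m => (Complex.nonneg_iff.mp (hτ m).trace_nonneg).1,
    by rw [← Complex.re_sum, htr, Complex.one_re], hρ, ?_⟩
  exact Finset.sum_congr rfl fun m _ => (congrArg (· ⊗ₖ _) (hτρ m)).trans (smul_kronecker _ _ _)

/-- every one-way LQICC map `∑ i, E_i^A ⊗ Ẽ_i^B`, where `{E_i^A}` is a
quantum instrument on `A` (each `E_i` completely positive, `∑ i E_i` trace-preserving)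
and each `Ẽ_i^B` is an incoherent CPTP map on `B`, is QI-preserving. -/
theorem one_way_lqicc_qip (DA DB N : ℕ)
    (Einstr : Fin N → (Matrix (Fin DA) (Fin DA) ℂ →ₗ[ℂ] Matrix (Fin DA) (Fin DA) ℂ))
    (hCP : ∀ i, IsCompletelyPositive (Einstr i))
    (hTP : ∀ X : Matrix (Fin DA) (Fin DA) ℂ, ∑ i, ((Einstr i) X).trace = X.trace)
    (Et : Fin N → (Matrix (Fin DB) (Fin DB) ℂ →ₗ[ℂ] Matrix (Fin DB) (Fin DB) ℂ))
    (hEt : ∀ i, IsIncoherentOp DB (Et i)) :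
    ∀ σ, IsQI σ → IsQI (∑ i, mapTensor DA DB (Einstr i) (Et i) σ) := by
  rintro σ ⟨p, ρ, hp, hp1, hρ, rfl⟩
  choose q hq0 hq1 hq using fun i => (hEt i).exists_stochastic_apply_single
  let τ m := ∑ i, ∑ j, ((p j * q i j m : ℝ) : ℂ) • Einstr i (ρ j)
  have hτ : ∀ m, (τ m).PosSemidef := fun m =>
    posSemidef_sum _ fun i _ => posSemidef_sum _ fun j _ =>
      ((hCP i).posSemidef_apply (hρ j).1).smul
        (Complex.zero_le_real.mpr (mul_nonneg (hp j) (hq0 i j m)))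
  have htr : ∑ m, (τ m).trace = 1 := by
    simp only [τ, trace_sum, trace_smul, smul_eq_mul, Complex.ofReal_mul, mul_assoc]
    rw [← Finset.sum_comm_cycle]
    simp_rw [← Finset.mul_sum, ← Finset.sum_mul, ← Complex.ofReal_sum, hq1, Complex.ofReal_one,
      one_mul]
    rw [Finset.sum_comm]
    simp_rw [← Finset.mul_sum, hTP, (hρ _).2, mul_one, ← Complex.ofReal_sum, hp1,
      Complex.ofReal_one]
  convert isQI_sum_kronecker_single τ hτ htr using 1
  simp only [τ, map_sum, _root_.map_smul, mapTensor_kronecker, hq, kronecker_sum, sum_kronecker,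
    kronecker_smul, smul_kronecker, Finset.smul_sum, smul_smul]
  rw [Finset.sum_comm_cycle]
  simp only [Complex.ofReal_mul]
end
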